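/- Fix intermediate dominoes (x_1, y_1), …, (x_n, y_n) and end domino (x_{n+1}, y_{n+1}) over {a, b}, and let R1 be the string rewriting system constructed from them as in the context. Then for every symbol d ∈ Σ̂ and all strings Z1, Z2 over Σ̂: Z1·d ↓_{R1} Z2·d if and only if Z1 ↓_{R1} Z2. In particular, if Z1 and Z2 are irreducible and Z1·d ↓_{R1} Z2·d, then Z1 = Z2. -/

import Mathlib

/- Strings over an alphabet `σ` are modelled as `List σ`; a finite string
rewriting system is a finite list of rules `(l, r)`. -/

namespace SRS

variable {σ : Type*}

/-- One-step rewrite relation: `u →_R v`. -/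
def Step (R : List (List σ × List σ)) (u v : List σ) : Prop :=
  ∃ x y l r, (l, r) ∈ R ∧ u = x ++ l ++ y ∧ v = x ++ r ++ y

/-- `u →*_R v`: reflexive-transitive closure. -/
def Reduces (R : List (List σ × List σ)) : List σ → List σ → Prop :=
  Relation.ReflTransGen (Step R)

/-- `u ↔*_R v`: reflexive-symmetric-transitive closure. -/
def Equiv (R : List (List σ × List σ)) : List σ → List σ → Prop :=
  Relation.EqvGen (Step R)

/-- `u ↓_R v`: joinability, i.e. a common reduct exists. -/
def Joins (R : List (List σ × List σ)) : List σ → List σ → Prop :=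
  Relation.Join (Reduces R)

/-- A string is irreducible if no rule applies to it. -/
def Irreducible (R : List (List σ × List σ)) (u : List σ) : Prop :=
  ∀ v, ¬ Step R u v

/-- `u →!_R v`: `v` is an `R`-normal form of `u`. -/
def NormalizesTo (R : List (List σ × List σ)) (u v : List σ) : Prop :=
  Reduces R u v ∧ Irreducible R v

/-- Terminating: no infinite chain of rewrite steps. -/
def Terminating (R : List (List σ × List σ)) : Prop :=
  ¬ ∃ f : ℕ → List σ, ∀ n, Step R (f n) (f (n + 1))

def Confluent (R : List (List σ × List σ)) : Prop :=
  ∀ t s₁ s₂, Reduces R t s₁ → Reduces R t s₂ →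
    ∃ t', Reduces R s₁ t' ∧ Reduces R s₂ t'

def Convergent (R : List (List σ × List σ)) : Prop :=
  Terminating R ∧ Confluent R

/-- Dwindling: every right-hand side is a proper prefix of its left-hand side. -/
def Dwindling (R : List (List σ × List σ)) : Prop :=
  ∀ p ∈ R, p.2 <+: p.1 ∧ p.2 ≠ p.1

/-- Monadic: length-reducing with right-hand sides of length at most 1. -/
def Monadic (R : List (List σ × List σ)) : Prop :=
  ∀ p ∈ R, p.2.length < p.1.length ∧ p.2.length ≤ 1

/-- `MP α`: normal forms of `p ++ s` with `p` a prefix of `α` and `s` a single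
symbol or the empty string. -/
def MP (R : List (List σ × List σ)) (α : List σ) : Set (List σ) :=
  { γ | ∃ p s, p <+: α ∧ s.length ≤ 1 ∧ NormalizesTo R (p ++ s) γ }

end SRS

/-! ### The alphabet `Σ̂` and rewriting system `R₁`

Letters of `{a, b}` are modelled by `Bool` (`true ↦ a`, `false ↦ b`).  The
intermediate dominoes `(x₁, y₁), …, (x_n, y_n)` and the end domino
`(x_{n+1}, y_{n+1})` are given by `x y : Fin (n + 1) → List Bool`, where index
`j : Fin (n + 1)` stands for the domino with index `j + 1`; thus `j` with
`(j : ℕ) < n` are the intermediate dominoes and `j = Fin.last n` is the end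
domino.  Correspondingly `Alph.c j` denotes the symbol `c_{j+1}`. -/

/-- The alphabet `Σ̂ = {a, b} ∪ {c₁, …, c_{n+1}} ∪ {¢₁, ¢₂, $, #₁, #₂}`. -/
inductive Alph (n : ℕ) : Type
  | a | b
  | c (j : Fin (n + 1))
  | cent1 | cent2 | dollar | hash1 | hash2

/-- Embedding of strings over `{a, b}` into strings over `Σ̂`. -/
def emb {n : ℕ} (w : List Bool) : List (Alph n) :=
  w.map fun s => if s then Alph.a else Alph.b

/-- The string rewriting system `R₁`:
`¢₁·cᵢ → xᵢ·¢₁`, `¢₂·cᵢ → yᵢ·¢₂` for `1 ≤ i ≤ n`;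
`¢₁·c_{n+1} → #₁·x_{n+1}·$`, `¢₂·c_{n+1} → #₂·y_{n+1}·$`;
`s·#₁ → #₁·s`, `s·#₂ → #₂·s` for `s ∈ {a, b}`. -/
def R1 (n : ℕ) (x y : Fin (n + 1) → List Bool) :
    List (List (Alph n) × List (Alph n)) :=
  ((List.finRange (n + 1)).flatMap fun (j : Fin (n + 1)) =>
    if (j : ℕ) < n then
      [ ([Alph.cent1, Alph.c j], emb (x j) ++ [Alph.cent1]),
        ([Alph.cent2, Alph.c j], emb (y j) ++ [Alph.cent2]) ]
    else
      [ ([Alph.cent1, Alph.c j], [Alph.hash1] ++ emb (x j) ++ [Alph.dollar]),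
        ([Alph.cent2, Alph.c j], [Alph.hash2] ++ emb (y j) ++ [Alph.dollar]) ])
  ++ ([true, false].flatMap fun s =>
      [ ([(if s then Alph.a else Alph.b), Alph.hash1],
         [Alph.hash1, (if s then Alph.a else Alph.b)]),
        ([(if s then Alph.a else Alph.b), Alph.hash2],
         [Alph.hash2, (if s then Alph.a else Alph.b)]) ])

/-- The GPCP instance with start domino `(x₀, y₀)`, intermediate dominoes
`(x_j, y_j)` (`1 ≤ j ≤ n`) and end domino `(x_{n+1}, y_{n+1})` has a solution. -/
def GPCPSol (n : ℕ) (x₀ y₀ : List Bool) (x y : Fin (n + 1) → List Bool) : Prop :=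
  ∃ l : List (Fin (n + 1)), (∀ j ∈ l, (j : ℕ) < n) ∧
    x₀ ++ l.flatMap x ++ x (Fin.last n) = y₀ ++ l.flatMap y ++ y (Fin.last n)

/-!
Every left-hand side of `R₁` has length two and ends in some `c_j` or `#ᵢ`, so a trailing
`a`, `b`, `¢ᵢ` or `$` is never touched by a rewrite and cancels. A trailing `#ᵢ` only travels
left across letters, so every reduct of `Z·#ᵢ·w` (with `w` over `{a, b}`) is `A·#ᵢ·w'` with
`Z·w →* A·w'`, and since `#ᵢ` is the last non-letter it pins down `A`, `i` and `w'`. A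
trailing `c_j` either survives, or is consumed together with some `¢ᵢ`, after which the
string ends in `¢ᵢ` (intermediate domino) or in `#ᵢ·x·$` (end domino); either way a common
reduct determines `i`, and the cancellation reduces to the two previous cases.
-/

namespace SRS

variable {σ : Type*} {R : List (List σ × List σ)}

def EndsLhs (R : List (List σ × List σ)) (s : σ) : Prop :=
  ∃ l r, (l ++ [s], r) ∈ R

theorem Step.append_right {u v : List σ} (h : Step R u v) (w : List σ) :
    Step R (u ++ w) (v ++ w) := by
  obtain ⟨p, q, l, r, hm, rfl, rfl⟩ := h
  exact ⟨p, q ++ w, l, r, hm, by simp, by simp⟩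

theorem Reduces.append_right {u v : List σ} (h : Reduces R u v) (w : List σ) :
    Reduces R (u ++ w) (v ++ w) := by
  induction h with
  | refl => exact .refl
  | tail _ st ih => exact ih.tail (st.append_right w)

theorem Joins.append_right {u v : List σ} (h : Joins R u v) (w : List σ) :
    Joins R (u ++ w) (v ++ w) :=
  let ⟨t, hu, hv⟩ := h
  ⟨t ++ w, hu.append_right w, hv.append_right w⟩

theorem Joins.of_reduces {u u' v v' : List σ} (h : Joins R u' v') (hu : Reduces R u u')
    (hv : Reduces R v v') : Joins R u v :=
  let ⟨t, hu', hv'⟩ := h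
  ⟨t, hu.trans hu', hv.trans hv'⟩

theorem Irreducible.eq_of_reduces {u v : List σ} (hu : Irreducible R u) (h : Reduces R u v) :
    v = u := by
  induction h with
  | refl => rfl
  | tail _ st ih => exact absurd (ih ▸ st) (hu _)

theorem Joins.eq_of_irreducible {u v : List σ} (hu : Irreducible R u) (hv : Irreducible R v)
    (h : Joins R u v) : u = v :=
  let ⟨_, hu', hv'⟩ := h
  (hu.eq_of_reduces hu').symm.trans (hv.eq_of_reduces hv')

theorem step_append_singleton (hR : ∀ p ∈ R, p.1 ≠ []) {U V : List σ} {d : σ}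
    (h : Step R (U ++ [d]) V) :
    (∃ U', Step R U U' ∧ V = U' ++ [d]) ∨
      ∃ X l r, (l ++ [d], r) ∈ R ∧ U = X ++ l ∧ V = X ++ r := by
  obtain ⟨p, q, l, r, hm, hU, rfl⟩ := h
  rcases List.eq_nil_or_concat' q with rfl | ⟨q, e, rfl⟩
  · obtain ⟨l, e, rfl⟩ := (List.eq_nil_or_concat' l).resolve_left (hR _ hm)
    obtain ⟨rfl, rfl⟩ : U = p ++ l ∧ d = e := by simpa [← List.append_assoc] using hU
    exact .inr ⟨p, l, r, hm, rfl, by simp⟩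
  · obtain ⟨rfl, rfl⟩ : U = p ++ l ++ q ∧ d = e := by simpa [← List.append_assoc] using hU
    exact .inl ⟨p ++ r ++ q, ⟨p, q, l, r, hm, rfl, rfl⟩, by simp⟩

theorem reduces_append_singleton (hR : ∀ p ∈ R, p.1 ≠ []) {Z W : List σ} {d : σ}
    (h : Reduces R (Z ++ [d]) W) :
    (∃ Z', Reduces R Z Z' ∧ W = Z' ++ [d]) ∨
      ∃ X l r, (l ++ [d], r) ∈ R ∧ Reduces R Z (X ++ l) ∧ Reduces R (X ++ r) W := by
  induction h with
  | refl => exact .inl ⟨Z, .refl, rfl⟩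
  | tail _ st ih =>
    rcases ih with ⟨Z', hZ, rfl⟩ | ⟨X, l, r, hm, hZ, hW⟩
    · rcases step_append_singleton hR st with ⟨Z'', st', rfl⟩ | ⟨X, l, r, hm, rfl, rfl⟩
      · exact .inl ⟨Z'', hZ.tail st', rfl⟩
      · exact .inr ⟨X, l, r, hm, hZ, .refl⟩
    · exact .inr ⟨X, l, r, hm, hZ, hW.tail st⟩

theorem Step.of_append (hR : ∀ p ∈ R, p.1 ≠ []) {M E V : List σ}
    (hE : ∀ s ∈ E, ¬ EndsLhs R s) (h : Step R (M ++ E) V) :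
    ∃ M', Step R M M' ∧ V = M' ++ E := by
  induction E using List.reverseRecOn generalizing V with
  | nil => exact ⟨V, by simpa using h, by simp⟩
  | append_singleton E e ih =>
    rw [← List.append_assoc] at h
    rcases step_append_singleton hR h with ⟨V, hV, rfl⟩ | ⟨_, l, r, hm, -⟩
    · obtain ⟨M', hM', rfl⟩ := ih (fun s hs => hE s (by simp [hs])) hV
      exact ⟨M', hM', by simp⟩
    · exact absurd ⟨l, r, hm⟩ (hE e (by simp))

theorem Reduces.of_append (hR : ∀ p ∈ R, p.1 ≠ []) {M E W : List σ}
    (hE : ∀ s ∈ E, ¬ EndsLhs R s) (h : Reduces R (M ++ E) W) :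
    ∃ M', Reduces R M M' ∧ W = M' ++ E := by
  induction h with
  | refl => exact ⟨M, .refl, rfl⟩
  | tail _ st ih =>
    obtain ⟨M', hM', rfl⟩ := ih
    obtain ⟨M'', st', rfl⟩ := st.of_append hR hE
    exact ⟨M'', hM'.tail st', rfl⟩

theorem joins_append_singleton (hR : ∀ p ∈ R, p.1 ≠ []) {M N : List σ} {d₁ d₂ : σ}
    (hd₁ : ¬ EndsLhs R d₁) (hd₂ : ¬ EndsLhs R d₂)
    (h : Joins R (M ++ [d₁]) (N ++ [d₂])) :
    d₁ = d₂ ∧ Joins R M N := by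
  obtain ⟨W, hM, hN⟩ := h
  obtain ⟨M', hM', rfl⟩ := hM.of_append hR (E := [d₁]) (by simpa using hd₁)
  obtain ⟨N', hN', hW⟩ := hN.of_append hR (E := [d₂]) (by simpa using hd₂)
  obtain ⟨rfl, rfl⟩ : M' = N' ∧ d₁ = d₂ := by simpa using hW
  exact ⟨rfl, M', hM', hN'⟩

theorem joins_append_iff (hR : ∀ p ∈ R, p.1 ≠ []) {M N E : List σ}
    (hE : ∀ s ∈ E, ¬ EndsLhs R s) : Joins R (M ++ E) (N ++ E) ↔ Joins R M N := by
  refine ⟨fun ⟨W, hM, hN⟩ => ?_, fun h => h.append_right E⟩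
  obtain ⟨M', hM', rfl⟩ := hM.of_append hR hE
  obtain ⟨N', hN', hW⟩ := hN.of_append hR hE
  exact ⟨M', hM', List.append_cancel_right hW ▸ hN'⟩

end SRS

theorem List.eq_of_append_cons_eq {α : Type*} {l₁ l₂ l₁' l₂' : List α} {a a' : α}
    (h : l₁ ++ a :: l₂ = l₁' ++ a' :: l₂') (ha : a ∉ l₂') (ha' : a' ∉ l₂) :
    l₁ = l₁' ∧ a = a' ∧ l₂ = l₂' := by
  induction l₁ generalizing l₁' with
  | nil =>
    cases l₁' with
    | nil => simpa using h
    | cons b l₁' =>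
      obtain ⟨-, rfl⟩ := List.cons_eq_cons.1 h
      simp at ha'
  | cons b l₁ ih =>
    cases l₁' with
    | nil =>
      obtain ⟨-, rfl⟩ := List.cons_eq_cons.1 h
      simp at ha
    | cons b' l₁' =>
      rw [List.cons_append, List.cons_append, List.cons_eq_cons] at h
      simpa [h.1] using ih h.2

namespace Alph

variable {n : ℕ}

def ofBool (s : Bool) : Alph n := if s then a else b

-- `t = true` selects the `x`-track (`¢₁`, `#₁`), `t = false` the `y`-track (`¢₂`, `#₂`).
def centOf (t : Bool) : Alph n := if t then cent1 else cent2

def hashOf (t : Bool) : Alph n := if t then hash1 else hash2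

theorem centOf_injective : Function.Injective (centOf (n := n)) := by
  intro t₁ t₂; cases t₁ <;> cases t₂ <;> simp [centOf]

theorem hashOf_injective : Function.Injective (hashOf (n := n)) := by
  intro t₁ t₂; cases t₁ <;> cases t₂ <;> simp [hashOf]

end Alph

section R1

open Alph SRS

variable {n : ℕ} {x y : Fin (n + 1) → List Bool}

-- The right-hand side of the rule `¢ c_j → …` on track `t`.
def cRhs (x y : Fin (n + 1) → List Bool) (t : Bool) (j : Fin (n + 1)) : List (Alph n) :=
  if (j : ℕ) < n then emb (if t then x j else y j) ++ [centOf t]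
  else [hashOf t] ++ emb (if t then x j else y j) ++ [dollar]

theorem R1_rule_cases {l r : List (Alph n)} (h : (l, r) ∈ R1 n x y) :
    (∃ t j, l = [centOf t, c j] ∧ r = cRhs x y t j) ∨
      ∃ t s, l = [ofBool s, hashOf t] ∧ r = [hashOf t, ofBool s] := by
  simp only [R1, List.mem_append, List.mem_flatMap, List.mem_finRange, true_and] at h
  rcases h with ⟨j, hj⟩ | ⟨s, -, hs⟩
  · left
    by_cases hjn : (j : ℕ) < n <;>
      simp only [hjn, if_true, if_false, List.mem_cons, List.not_mem_nil, or_false,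
        Prod.mk.injEq] at hj <;>
      rcases hj with ⟨rfl, rfl⟩ | ⟨rfl, rfl⟩
    exacts [⟨true, j, rfl, by simp [cRhs, hjn, centOf]⟩,
      ⟨false, j, rfl, by simp [cRhs, hjn, centOf]⟩,
      ⟨true, j, rfl, by simp [cRhs, hjn, hashOf]⟩,
      ⟨false, j, rfl, by simp [cRhs, hjn, hashOf]⟩]
  · right
    simp only [List.mem_cons, List.not_mem_nil, or_false, Prod.mk.injEq] at hs
    rcases hs with ⟨rfl, rfl⟩ | ⟨rfl, rfl⟩
    exacts [⟨true, s, rfl, rfl⟩, ⟨false, s, rfl, rfl⟩]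

theorem R1_lhs_ne_nil : ∀ p ∈ R1 n x y, p.1 ≠ [] := by
  rintro ⟨l, r⟩ h
  rcases R1_rule_cases h with ⟨t, j, rfl, -⟩ | ⟨t, s, rfl, -⟩ <;> simp

theorem R1_rule_c {l r : List (Alph n)} {j : Fin (n + 1)} (h : (l ++ [c j], r) ∈ R1 n x y) :
    ∃ t, l = [centOf t] ∧ r = cRhs x y t j := by
  rcases R1_rule_cases h with ⟨t, j', hl, rfl⟩ | ⟨t, s, hl, -⟩
  · obtain ⟨rfl, hj⟩ := List.append_inj' (s₂ := [_]) hl rfl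
    obtain rfl : j = j' := by simpa using hj
    exact ⟨t, rfl, rfl⟩
  · have := (List.append_inj' (s₂ := [_]) hl rfl).2
    cases t <;> simp [hashOf] at this

theorem R1_rule_hashOf {l r : List (Alph n)} {t : Bool}
    (h : (l ++ [hashOf t], r) ∈ R1 n x y) :
    ∃ s, l = [ofBool s] ∧ r = [hashOf t, ofBool s] := by
  rcases R1_rule_cases h with ⟨t', j, hl, -⟩ | ⟨t', s, hl, rfl⟩
  · have := (List.append_inj' (s₂ := [_]) hl rfl).2
    cases t <;> simp [hashOf] at this
  · obtain ⟨rfl, ht⟩ := List.append_inj' (s₂ := [_]) hl rfl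
    obtain rfl : t = t' := hashOf_injective (by simpa using ht)
    exact ⟨s, rfl, rfl⟩

theorem R1_endsLhs {s : Alph n} (h : EndsLhs (R1 n x y) s) :
    (∃ j, s = c j) ∨ ∃ t, s = hashOf t := by
  obtain ⟨l, r, h⟩ := h
  rcases R1_rule_cases h with ⟨t, j, hl, -⟩ | ⟨t, s, hl, -⟩
  · exact .inl ⟨j, by simpa using (List.append_inj' (s₂ := [_]) hl rfl).2⟩
  · exact .inr ⟨t, by simpa using (List.append_inj' (s₂ := [_]) hl rfl).2⟩

theorem not_endsLhs_R1_ofBool (s : Bool) : ¬ EndsLhs (R1 n x y) (ofBool s) := by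
  intro h
  rcases R1_endsLhs h with ⟨j, h⟩ | ⟨t, h⟩ <;> cases s <;> (try cases t) <;>
    simp [ofBool, hashOf] at h

theorem not_endsLhs_R1_of_mem_emb {w : List Bool} {s : Alph n} (hs : s ∈ emb w) :
    ¬ EndsLhs (R1 n x y) s := by
  obtain ⟨b, -, rfl⟩ := List.mem_map.1 hs
  exact not_endsLhs_R1_ofBool b

theorem not_endsLhs_R1_centOf (t : Bool) : ¬ EndsLhs (R1 n x y) (centOf t) := by
  intro h
  rcases R1_endsLhs h with ⟨j, h⟩ | ⟨t', h⟩ <;> cases t <;> (try cases t') <;>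
    simp [centOf, hashOf] at h

theorem not_endsLhs_R1_dollar : ¬ EndsLhs (R1 n x y) dollar := by
  intro h
  rcases R1_endsLhs h with ⟨j, h⟩ | ⟨t, h⟩ <;> (try cases t) <;> simp [hashOf] at h

theorem hashOf_not_mem_emb (t : Bool) (w : List Bool) : hashOf (n := n) t ∉ emb w := by
  cases t <;> simp [emb, hashOf]

theorem reduces_append_hashOf {Z W : List (Alph n)} {t : Bool} {v : List Bool}
    (h : Reduces (R1 n x y) (Z ++ hashOf t :: emb v) W) :
    ∃ A u, W = A ++ hashOf t :: emb u ∧ Reduces (R1 n x y) (Z ++ emb v) (A ++ emb u) := by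
  induction h with
  | refl => exact ⟨Z, v, rfl, .refl⟩
  | tail _ st ih =>
    obtain ⟨A, u, rfl, hA⟩ := ih
    obtain ⟨V, stV, rfl⟩ := Step.of_append (M := A ++ [hashOf t]) R1_lhs_ne_nil
      (fun _ => not_endsLhs_R1_of_mem_emb) (by simpa using st)
    rcases step_append_singleton R1_lhs_ne_nil stV with
      ⟨A', stA, rfl⟩ | ⟨X, l, r, hm, rfl, rfl⟩
    · exact ⟨A', u, by simp, hA.tail (stA.append_right _)⟩
    · obtain ⟨s, rfl, rfl⟩ := R1_rule_hashOf hm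
      exact ⟨X, s :: u, by simp [emb, ofBool], by simpa [emb, ofBool] using hA⟩

theorem joins_append_hashOf {Z₁ Z₂ : List (Alph n)} {t₁ t₂ : Bool} {v₁ v₂ : List Bool}
    (h : Joins (R1 n x y) (Z₁ ++ hashOf t₁ :: emb v₁) (Z₂ ++ hashOf t₂ :: emb v₂)) :
    t₁ = t₂ ∧ Joins (R1 n x y) (Z₁ ++ emb v₁) (Z₂ ++ emb v₂) := by
  obtain ⟨W, h₁, h₂⟩ := h
  obtain ⟨A₁, u₁, rfl, hA₁⟩ := reduces_append_hashOf h₁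
  obtain ⟨A₂, u₂, hW, hA₂⟩ := reduces_append_hashOf h₂
  obtain ⟨rfl, ht, hu⟩ :=
    List.eq_of_append_cons_eq hW (hashOf_not_mem_emb _ _) (hashOf_not_mem_emb _ _)
  exact ⟨hashOf_injective ht, _, hA₁, hu ▸ hA₂⟩

theorem reduces_append_c {Z W : List (Alph n)} {j : Fin (n + 1)}
    (h : Reduces (R1 n x y) (Z ++ [c j]) W) :
    (∃ Z', Reduces (R1 n x y) Z Z' ∧ W = Z' ++ [c j]) ∨
      ∃ t X, Reduces (R1 n x y) Z (X ++ [centOf t]) ∧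
        Reduces (R1 n x y) (X ++ cRhs x y t j) W := by
  refine (reduces_append_singleton R1_lhs_ne_nil h).imp_right ?_
  rintro ⟨X, l, r, hm, hZ, hW⟩
  obtain ⟨t, rfl, rfl⟩ := R1_rule_c hm
  exact ⟨t, X, hZ, hW⟩

theorem not_reduces_append_cRhs_c {X Z : List (Alph n)} {t : Bool} {j k : Fin (n + 1)}
    (h : Reduces (R1 n x y) (X ++ cRhs x y t j) (Z ++ [c k])) : False := by
  obtain ⟨r, e, hr, he, hek⟩ :
      ∃ r e, cRhs x y t j = r ++ [e] ∧ ¬ EndsLhs (R1 n x y) e ∧ e ≠ c k := by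
    by_cases hj : (j : ℕ) < n <;> simp only [cRhs, hj, ↓reduceIte]
    · exact ⟨_, _, rfl, not_endsLhs_R1_centOf t, by cases t <;> simp [centOf]⟩
    · exact ⟨_, _, rfl, not_endsLhs_R1_dollar, by simp⟩
  rw [hr, ← List.append_assoc] at h
  obtain ⟨_, -, hW⟩ := h.of_append R1_lhs_ne_nil (E := [e]) (by simpa using he)
  exact hek (by simpa using (List.append_inj' hW rfl).2.symm)

theorem joins_append_cRhs {X₁ X₂ : List (Alph n)} {t₁ t₂ : Bool} {j : Fin (n + 1)}
    (h : Joins (R1 n x y) (X₁ ++ cRhs x y t₁ j) (X₂ ++ cRhs x y t₂ j)) :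
    t₁ = t₂ ∧ Joins (R1 n x y) X₁ X₂ := by
  have cancel_emb {w : List Bool} :=
    joins_append_iff (R := R1 n x y) (M := X₁) (N := X₂) (E := emb w) R1_lhs_ne_nil
      (fun _ => not_endsLhs_R1_of_mem_emb)
  by_cases hj : (j : ℕ) < n <;> simp only [cRhs, hj, ↓reduceIte] at h
  · obtain ⟨ht, h⟩ := joins_append_singleton R1_lhs_ne_nil (not_endsLhs_R1_centOf t₁)
      (not_endsLhs_R1_centOf t₂) (by simpa only [← List.append_assoc] using h)
    obtain rfl := centOf_injective ht
    exact ⟨rfl, cancel_emb.1 h⟩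
  · obtain ⟨-, h⟩ := joins_append_singleton R1_lhs_ne_nil not_endsLhs_R1_dollar
      not_endsLhs_R1_dollar (by simpa only [← List.append_assoc] using h)
    obtain ⟨rfl, h⟩ := joins_append_hashOf (by simpa using h)
    exact ⟨rfl, cancel_emb.1 h⟩

theorem joins_append_c {Z₁ Z₂ : List (Alph n)} {j : Fin (n + 1)}
    (h : Joins (R1 n x y) (Z₁ ++ [c j]) (Z₂ ++ [c j])) : Joins (R1 n x y) Z₁ Z₂ := by
  obtain ⟨W, h₁, h₂⟩ := h
  rcases reduces_append_c h₁ with ⟨Z₁', hZ₁, rfl⟩ | ⟨t₁, X₁, hZ₁, hX₁⟩ <;>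
    rcases reduces_append_c h₂ with ⟨Z₂', hZ₂, hW⟩ | ⟨t₂, X₂, hZ₂, hX₂⟩
  · exact ⟨Z₁', hZ₁, List.append_cancel_right hW ▸ hZ₂⟩
  · exact (not_reduces_append_cRhs_c hX₂).elim
  · exact (not_reduces_append_cRhs_c (hW ▸ hX₁)).elim
  · obtain ⟨rfl, hX⟩ := joins_append_cRhs ⟨W, hX₁, hX₂⟩
    exact (hX.append_right [centOf t₁]).of_reduces hZ₁ hZ₂

end R1

theorem R1_cancel_last_symbol_general (n : ℕ) (x y : Fin (n + 1) → List Bool)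
    (d : Alph n) (Z₁ Z₂ : List (Alph n)) :
    (SRS.Joins (R1 n x y) (Z₁ ++ [d]) (Z₂ ++ [d]) ↔ SRS.Joins (R1 n x y) Z₁ Z₂)
    ∧ (SRS.Irreducible (R1 n x y) Z₁ → SRS.Irreducible (R1 n x y) Z₂ →
        SRS.Joins (R1 n x y) (Z₁ ++ [d]) (Z₂ ++ [d]) → Z₁ = Z₂) := by
  have cancel :
      SRS.Joins (R1 n x y) (Z₁ ++ [d]) (Z₂ ++ [d]) ↔ SRS.Joins (R1 n x y) Z₁ Z₂ := by
    refine ⟨fun h => ?_, fun h => h.append_right [d]⟩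
    by_cases hd : SRS.EndsLhs (R1 n x y) d
    · rcases R1_endsLhs hd with ⟨j, rfl⟩ | ⟨t, rfl⟩
      · exact joins_append_c h
      · have h' := joins_append_hashOf (v₁ := []) (v₂ := []) (by simpa [emb] using h)
        simpa [emb] using h'.2
    · exact (SRS.joins_append_iff R1_lhs_ne_nil (by simpa using hd)).1 h
  exact ⟨cancel, fun h₁ h₂ h => SRS.Joins.eq_of_irreducible h₁ h₂ (cancel.1 h)⟩

/-- For every symbol `d ∈ Σ̂` and strings `Z₁, Z₂` over `Σ̂`:
`Z₁·d ↓_{R₁} Z₂·d` iff `Z₁ ↓_{R₁} Z₂`; in particular, for irreducible `Z₁, Z₂`,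
`Z₁·d ↓_{R₁} Z₂·d` implies `Z₁ = Z₂`. -/
theorem R1_cancel_last_symbol (n : ℕ) (x y : Fin (n + 1) → List Bool)
    (hx : ∀ j, x j ≠ []) (hy : ∀ j, y j ≠ [])
    (d : Alph n) (Z₁ Z₂ : List (Alph n)) :
    (SRS.Joins (R1 n x y) (Z₁ ++ [d]) (Z₂ ++ [d]) ↔ SRS.Joins (R1 n x y) Z₁ Z₂)
    ∧ (SRS.Irreducible (R1 n x y) Z₁ → SRS.Irreducible (R1 n x y) Z₂ →
        SRS.Joins (R1 n x y) (Z₁ ++ [d]) (Z₂ ++ [d]) → Z₁ = Z₂) :=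
  R1_cancel_last_symbol_general n x y d Z₁ Z₂
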